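/- arXiv:1711.05949 — 3 statements merged into one kernel-verified Lean document; each statement's English description precedes it below -/
import Mathlib

section
/- If the symmetric Laurent polynomial f(z_1,...,z_m) is a genuine polynomial, homogeneous of degree at least m in each variable z_k, then in the Grassmannian residue formula the residue at z_k = 0 of the form f(Z)·∏_{i≠j}(1 - z_i/z_j)·(1/z_k) / ∏_{i,k}(1 - z_k/t_i) vanishes for each k. -/
/-!
Fix the other variables and write `u = update z k w`. Every monomial of `f` is divisible by
`w ^ m`, so `f(u) = w ^ m q(w)` with `q` a polynomial. In `∏_{a ≠ b} (1 - u_a / u_b)` only the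
`m - 1` factors `1 - z_a / w` have a pole at `w = 0`, so `w ^ (m - 1)` times the product is a
polynomial `p(w)`. Finally the denominator splits as `w · ∏_i (1 - w / t_i) · c` with `c` constant.
Hence on the circle `|w| = r` the integrand equals `q(w) p(w) / ∏_i (1 - w / t_i) · c⁻¹`, which is
holomorphic on the closed disc because `r < |t_i|`, and Cauchy's theorem gives `0`.
-/

open Finset Metric Polynomial Function

section
variable {σ : Type*} [Fintype σ] [DecidableEq σ]

theorem Finset.prod_apply_update_eq_mul_prod_erase {α M : Type*} [CommMonoid M]
    (φ : σ → α → M) (z : σ → α) (k : σ) (w : α) :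
    ∏ j, φ j (update z k w j) = φ k w * ∏ j ∈ univ.erase k, φ j (z j) := by
  rw [← mul_prod_erase univ _ (mem_univ k), update_self]
  congr 1
  exact prod_congr rfl fun j hj => by rw [update_of_ne (ne_of_mem_erase hj)]

theorem MvPolynomial.exists_eval_update_eq_pow_mul {R : Type*} [CommSemiring R]
    (f : MvPolynomial σ R) (z : σ → R) (k : σ) {N : ℕ} (h : ∀ d ∈ f.support, N ≤ d k) :
    ∃ p : R[X], ∀ w, MvPolynomial.eval (update z k w) f = w ^ N * p.eval w := by
  refine ⟨∑ d ∈ f.support, Polynomial.C (coeff d f * ∏ j ∈ univ.erase k, z j ^ d j) *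
    Polynomial.X ^ (d k - N), fun w => ?_⟩
  rw [eval_eq', eval_finsetSum, mul_sum]
  refine sum_congr rfl fun d hd => ?_
  obtain ⟨e, he⟩ := Nat.exists_eq_add_of_le (h d hd)
  rw [prod_apply_update_eq_mul_prod_erase (fun j x => x ^ d j), he, Nat.add_sub_cancel_left]
  simp only [Polynomial.eval_mul, Polynomial.eval_C, Polynomial.eval_pow, Polynomial.eval_X]
  ring

theorem Finset.card_filter_offDiag_snd_eq (k : σ) :
    #(univ.offDiag.filter (·.2 = k)) = Fintype.card σ - 1 := by
  have : univ.offDiag.filter (·.2 = k) = (univ.erase k) ×ˢ {k} := by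
    ext ⟨a, b⟩
    simp only [mem_filter, mem_offDiag, mem_product, mem_erase, mem_singleton, mem_univ]
    grind
  rw [this, card_product, card_erase_of_mem (mem_univ k), card_singleton, mul_one, card_univ]

variable {K : Type*} [Field K]

theorem exists_pow_mul_prod_offDiag_one_sub_div_update_eq_eval (z : σ → K) (k : σ) :
    ∃ p : K[X], ∀ w ≠ 0, w ^ (Fintype.card σ - 1) *
      ∏ q ∈ univ.offDiag, (1 - update z k w q.1 / update z k w q.2) = p.eval w := by
  let ν : σ × σ → K[X] := fun q =>
    if q.2 = k then X - C (z q.1) else if q.1 = k then 1 - C (z q.2)⁻¹ * X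
    else C (1 - z q.1 / z q.2)
  have hν : ∀ w ≠ 0, ∀ q ∈ univ.offDiag,
      (1 - update z k w q.1 / update z k w q.2) * (if q.2 = k then w else 1) = (ν q).eval w := by
    rintro w hw ⟨a, b⟩ hab
    have hab : a ≠ b := (mem_offDiag.mp hab).2.2
    by_cases hb : b = k
    · subst hb
      simp only [ν, update_self, update_of_ne hab, if_pos, eval_sub, eval_X, eval_C]
      field_simp
    · by_cases ha : a = k
      · subst ha
        simp only [ν, update_self, update_of_ne hb, if_neg hb, if_pos, mul_one, eval_sub, eval_one,
          eval_mul, eval_C, eval_X]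
        ring
      · simp [ν, ha, hb]
  refine ⟨∏ q ∈ univ.offDiag, ν q, fun w hw => ?_⟩
  rw [eval_prod, ← prod_congr rfl (hν w hw), prod_mul_distrib, prod_ite, prod_const_one,
    prod_const, card_filter_offDiag_snd_eq, mul_one, mul_comm]

end

theorem one_sub_div_ne_zero_of_norm_lt {𝕜 : Type*} [NormedField 𝕜] {w t : 𝕜} (h : ‖w‖ < ‖t‖) : 1 - w / t ≠ 0 := by
  intro h0
  have ht : t ≠ 0 := norm_pos_iff.mp ((norm_nonneg w).trans_lt h)
  rw [sub_eq_zero, eq_div_iff ht, one_mul] at h0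
  exact h.ne (by rw [h0])

theorem prod_prod_one_sub_update_div_eq_mul {ι κ : Type*} [Fintype ι] [Fintype κ] [DecidableEq κ]
    {K : Type*} [Field K] (t : ι → K) (z : κ → K) (k : κ) (w : K) :
    ∏ i, ∏ l, (1 - update z k w l / t i) =
      (∏ i, (1 - w / t i)) * ∏ i, ∏ l ∈ univ.erase k, (1 - z l / t i) := by
  rw [← prod_mul_distrib]
  exact prod_congr rfl fun i _ => prod_apply_update_eq_mul_prod_erase (fun _ x => 1 - x / t i) z k w

theorem stmt7_general (m n : ℕ) (t : Fin n → ℂ)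
    (f : MvPolynomial (Fin m) ℂ)
    (hdeg : ∀ d ∈ f.support, ∀ k : Fin m, m ≤ d k)
    (k : Fin m) (z : Fin m → ℂ)
    (r : ℝ) (hr : 0 < r) (hrt : ∀ i, r < ‖t i‖) :
    (∮ w in C(0, r),
        MvPolynomial.eval (Function.update z k w) f
            * (∏ p ∈ (Finset.univ : Finset (Fin m)).offDiag,
                (1 - Function.update z k w p.1 / Function.update z k w p.2))
          / (w * ∏ i, ∏ l, (1 - Function.update z k w l / t i))) = 0 := by
  obtain ⟨q, hq⟩ := MvPolynomial.exists_eval_update_eq_pow_mul f z k fun d hd => hdeg d hd k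
  obtain ⟨p, hp⟩ := exists_pow_mul_prod_offDiag_one_sub_div_update_eq_eval z k
  obtain ⟨c, hc⟩ : ∃ c, ∀ w, ∏ i, ∏ l, (1 - update z k w l / t i) = (∏ i, (1 - w / t i)) * c :=
    ⟨_, prod_prod_one_sub_update_div_eq_mul t z k⟩
  have hB : ∀ w ∈ closedBall (0 : ℂ) r, ∏ i, (1 - w / t i) ≠ 0 := fun w hw =>
    prod_ne_zero_iff.mpr fun i _ => one_sub_div_ne_zero_of_norm_lt <|
      (mem_closedBall_zero_iff.mp hw).trans_lt (hrt i)
  -- `c` vanishes when some `z l = t i`; then both integrands are `0` by `x / 0 = 0` and `0⁻¹ = 0`.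
  calc _ = ∮ w in C(0, r), q.eval w * p.eval w / (∏ i, (1 - w / t i)) * c⁻¹ := by
        refine circleIntegral.integral_congr hr.le fun w hw => ?_
        have hw0 : w ≠ 0 := ne_zero_of_mem_sphere hr.ne' ⟨w, hw⟩
        obtain ⟨m', rfl⟩ : ∃ m', m = m' + 1 := Nat.exists_eq_add_one.mpr k.pos
        rw [hq, ← hp w hw0, hc, Fintype.card_fin, Nat.add_sub_cancel, pow_succ]
        have := hB w (sphere_subset_closedBall hw)
        field_simp
    _ = 0 := by
        have hg : ∀ w ∈ closedBall (0 : ℂ) r,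
            DifferentiableAt ℂ (fun w => q.eval w * p.eval w / (∏ i, (1 - w / t i)) * c⁻¹) w :=
          fun w hw => by fun_prop (disch := exact hB w hw)
        exact Complex.circleIntegral_eq_zero_of_differentiable_on_off_countable hr.le
          Set.countable_empty (fun w hw => (hg w hw).continuousAt.continuousWithinAt)
          fun w hw => hg w (ball_subset_closedBall hw.1)

/-- If the polynomial `f` in `m` variables has degree at least `m` in each
variable `z k` (in every monomial), then in the Grassmannian residue formula the residue
at `z k = 0` of the form
`f(Z) ∏_{i≠j} (1 - z i / z j) · (1/z k) / ∏_{i,l} (1 - z l / t i) dz k`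
vanishes for each `k`: the integrand, as a function of `z k` (the other variables fixed
and nonzero), is holomorphic at `z k = 0`, so the residue (circle integral over a small
circle of radius `r < min |t i|`) is zero. -/
theorem stmt7 (m n : ℕ) (t : Fin n → ℂ) (ht : ∀ i, t i ≠ 0)
    (f : MvPolynomial (Fin m) ℂ)
    (hdeg : ∀ d ∈ f.support, ∀ k : Fin m, m ≤ d k)
    (k : Fin m) (z : Fin m → ℂ) (hz : ∀ j, z j ≠ 0)
    (r : ℝ) (hr : 0 < r) (hrt : ∀ i, r < ‖t i‖) :
    (∮ w in C(0, r),
        MvPolynomial.eval (Function.update z k w) f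
            * (∏ p ∈ (Finset.univ : Finset (Fin m)).offDiag,
                (1 - Function.update z k w p.1 / Function.update z k w p.2))
          / (w * ∏ i, ∏ l, (1 - Function.update z k w l / t i))) = 0 :=
  stmt7_general m n t f hdeg k z r hr hrt
end

section
/- The Laurent polynomial z_1 z_2 (1 − z_1)(1 − z_2)(1 − z_1 z_2)(z_1 + 1/z_1 + z_2 + 1/z_2 + z_1 z_2 + 1/(z_1 z_2) − 6) equals 2·g_{41} + 2·g_{32} − g_{33} − 3·g_{42} + g_{43}, where g_{ab} = G_{a,b}(1/z_1, 1/z_2) with G_{a,b} the two-variable Grothendieck polynomial. -/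
/-! At `u = z⁻¹` the two denominators become `(z₂ - z₁) / z₂` and `(z₁ - z₂) / z₁`, so all the
`G_{a,b}` share the denominator `z₂ - z₁`; clearing it turns the claim into a polynomial identity. -/

/-- The quotient formula for the two-variable Grothendieck polynomial `G_{a,b}`. -/
noncomputable def Gq (a b : ℕ) (u₁ u₂ : ℂ) : ℂ :=
  (1 - u₁⁻¹) ^ (a + 1) * (1 - u₂⁻¹) ^ b / (1 - u₂ / u₁)
    + (1 - u₂⁻¹) ^ (a + 1) * (1 - u₁⁻¹) ^ b / (1 - u₁ / u₂)

theorem Gq_inv_inv (a b : ℕ) {z₁ z₂ : ℂ} (hz₁ : z₁ ≠ 0) (hz₂ : z₂ ≠ 0) :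
    Gq a b z₁⁻¹ z₂⁻¹ =
      (z₂ * (1 - z₁) ^ (a + 1) * (1 - z₂) ^ b - z₁ * (1 - z₂) ^ (a + 1) * (1 - z₁) ^ b)
        / (z₂ - z₁) := by
  have hden₁ : 1 - z₂⁻¹ / z₁⁻¹ = (z₂ - z₁) / z₂ := by field_simp
  have hden₂ : 1 - z₁⁻¹ / z₂⁻¹ = -((z₂ - z₁) / z₁) := by field_simp; ring
  rw [Gq, inv_inv, inv_inv, hden₁, hden₂]
  field_simp
  ring

/-- The Laurent polynomial
`z₁ z₂ (1-z₁)(1-z₂)(1-z₁z₂)(z₁ + 1/z₁ + z₂ + 1/z₂ + z₁z₂ + 1/(z₁z₂) - 6)`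
equals `2 g₄₁ + 2 g₃₂ - g₃₃ - 3 g₄₂ + g₄₃`, where `g_{ab} = G_{a,b}(1/z₁, 1/z₂)`. -/
theorem stmt12 (z₁ z₂ : ℂ) (hz₁ : z₁ ≠ 0) (hz₂ : z₂ ≠ 0) (hne : z₁ ≠ z₂) :
    z₁ * z₂ * (1 - z₁) * (1 - z₂) * (1 - z₁ * z₂)
        * (z₁ + z₁⁻¹ + z₂ + z₂⁻¹ + z₁ * z₂ + (z₁ * z₂)⁻¹ - 6)
      = 2 * Gq 4 1 z₁⁻¹ z₂⁻¹ + 2 * Gq 3 2 z₁⁻¹ z₂⁻¹ - Gq 3 3 z₁⁻¹ z₂⁻¹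
          - 3 * Gq 4 2 z₁⁻¹ z₂⁻¹ + Gq 4 3 z₁⁻¹ z₂⁻¹ := by
  have hsub : z₂ - z₁ ≠ 0 := sub_ne_zero.mpr hne.symm
  simp only [Gq_inv_inv _ _ hz₁ hz₂]
  field_simp
  ring
end

section
/- With the G₂/P₂ localization sum p(f) := ∑_{k=0}^{5} f(ξ^k(t_1,t_2))/D(ξ^k(t_1,t_2)) where D(t_1,t_2) = (1−t_1)(1−t_2)(1−t_1 t_2)(1−t_1²/t_2)(1−t_2²/t_1) and ξ(t_1,t_2) = (t_2, t_2/t_1), and setting A = 3 − t_1 − 1/t_2 − t_2/t_1, B = 3 − t_2 − 1/t_1 − t_1/t_2: for f = G_{4,4} evaluated at roots (i.e. f(t_1,t_2) = G_{4,4}(γ^*) written in the Grothendieck roots of γ as in the standard formula), p(f) = −A·B. -/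
/-!
At the Grothendieck roots the diagonal polynomial collapses: `G_{a,a}(1/x, 1/y) = (1-x)^a (1-y)^a`,
because the two quotient terms combine to `((1-x)y - (1-y)x)/(y-x) = 1`. With `a = 4` each summand
`(1-x)^4 (1-y)^4 / D(x,y)` has removable singularities along the factors `1-x`, `1-y` of `D`, so only
the factors `1 - t₁t₂`, `1 - t₁²/t₂`, `1 - t₂²/t₁` (permuted by `ξ` up to inversion) are genuine
poles, and the six-term orbit sum becomes a rational identity verified by clearing denominators.
-/

/-- The order-6 substitution `ξ(t₁,t₂) = (t₂, t₂/t₁)`. -/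
noncomputable def xiG2 (p : ℂ × ℂ) : ℂ × ℂ := (p.2, p.2 / p.1)

/-- The denominator `D(t₁,t₂) = (1-t₁)(1-t₂)(1-t₁t₂)(1-t₁²/t₂)(1-t₂²/t₁)`. -/
noncomputable def DG2 (p : ℂ × ℂ) : ℂ :=
  (1 - p.1) * (1 - p.2) * (1 - p.1 * p.2) * (1 - p.1 ^ 2 / p.2) * (1 - p.2 ^ 2 / p.1)

theorem Gq_diag_inv_inv (a : ℕ) {x y : ℂ} (hx : x ≠ 0) (hy : y ≠ 0) (hxy : x ≠ y) :
    Gq a a x⁻¹ y⁻¹ = (1 - x) ^ a * (1 - y) ^ a := by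
  have hxy₀ : x - y ≠ 0 := sub_ne_zero.mpr hxy
  have hyx₀ : y - x ≠ 0 := sub_ne_zero.mpr hxy.symm
  simp only [Gq, inv_inv, pow_succ]
  field_simp
  ring

theorem iterate_xiG2_ne_zero {p : ℂ × ℂ} (hp : p.1 ≠ 0 ∧ p.2 ≠ 0) (k : ℕ) :
    (xiG2^[k] p).1 ≠ 0 ∧ (xiG2^[k] p).2 ≠ 0 := by
  induction k with
  | zero => exact hp
  | succ k ih =>
    rw [Function.iterate_succ_apply']
    exact ⟨ih.2, div_ne_zero ih.2 ih.1⟩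

theorem sum_range_six_iterate_xiG2 (f : ℂ × ℂ → ℂ) {t₁ t₂ : ℂ} (h₁ : t₁ ≠ 0) (h₂ : t₂ ≠ 0) :
    ∑ k ∈ Finset.range 6, f (xiG2^[k] (t₁, t₂))
      = f (t₁, t₂) + f (t₂, t₂ / t₁) + f (t₂ / t₁, t₁⁻¹) + f (t₁⁻¹, t₂⁻¹)
        + f (t₂⁻¹, t₁ / t₂) + f (t₁ / t₂, t₁) := by
  have e₂ : t₂ / t₁ / t₂ = t₁⁻¹ := by field_simp
  have e₃ : t₁⁻¹ / (t₂ / t₁) = t₂⁻¹ := by field_simp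
  have e₅ : t₁ / t₂ / t₂⁻¹ = t₁ := by field_simp
  simp only [Finset.sum_range_succ, Finset.sum_range_zero, Function.iterate_succ_apply',
    Function.iterate_zero_apply, xiG2, e₂, e₃, inv_div_inv, e₅, zero_add]

theorem ne_of_DG2_ne_zero {t₁ t₂ : ℂ} (h₁ : t₁ ≠ 0) (h₂ : t₂ ≠ 0) (h : DG2 (t₁, t₂) ≠ 0) :
    t₁ * t₂ ≠ 1 ∧ t₁ ^ 2 ≠ t₂ ∧ t₂ ^ 2 ≠ t₁ := by
  simp only [DG2, ne_eq, mul_eq_zero, sub_eq_zero, eq_comm (a := (1 : ℂ)),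
    div_eq_one_iff_eq h₁, div_eq_one_iff_eq h₂, not_or] at h
  tauto

theorem sum_iterate_xiG2_pow_four_div_DG2 {t₁ t₂ : ℂ} (h₁ : t₁ ≠ 0) (h₂ : t₂ ≠ 0)
    (h₁₂ : t₁ * t₂ ≠ 1) (h₁₁ : t₁ ^ 2 ≠ t₂) (h₂₂ : t₂ ^ 2 ≠ t₁) :
    ∑ k ∈ Finset.range 6,
        (1 - (xiG2^[k] (t₁, t₂)).1) ^ 4 * (1 - (xiG2^[k] (t₁, t₂)).2) ^ 4
          / DG2 (xiG2^[k] (t₁, t₂))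
      = -((3 - t₁ - t₂⁻¹ - t₂ / t₁) * (3 - t₂ - t₁⁻¹ - t₁ / t₂)) := by
  rw [sum_range_six_iterate_xiG2 (fun p => (1 - p.1) ^ 4 * (1 - p.2) ^ 4 / DG2 p) h₁ h₂]
  simp only [DG2]
  field_simp [sub_ne_zero.mpr h₁₂, sub_ne_zero.mpr h₁₁, sub_ne_zero.mpr h₂₂]
  ring

/-- With `A = 3 - t₁ - 1/t₂ - t₂/t₁` and `B = 3 - t₂ - 1/t₁ - t₁/t₂`, and
`f(t₁,t₂) = G_{4,4}` evaluated at the Grothendieck roots (i.e. `f p = G_{4,4}(1/p.1, 1/p.2)`),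
the G₂/P₂ localization sum `p(f) = ∑_{k=0}^{5} f(ξ^k(t₁,t₂)) / D(ξ^k(t₁,t₂))`
equals `-A·B`. -/
theorem stmt16 (t₁ t₂ : ℂ) (h₁ : t₁ ≠ 0) (h₂ : t₂ ≠ 0)
    (hD : ∀ k < 6, DG2 (xiG2^[k] (t₁, t₂)) ≠ 0)
    (hne : ∀ k < 6, (xiG2^[k] (t₁, t₂)).1 ≠ (xiG2^[k] (t₁, t₂)).2) :
    ∑ k ∈ Finset.range 6,
        Gq 4 4 ((xiG2^[k] (t₁, t₂)).1)⁻¹ ((xiG2^[k] (t₁, t₂)).2)⁻¹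
          / DG2 (xiG2^[k] (t₁, t₂))
      = -((3 - t₁ - t₂⁻¹ - t₂ / t₁) * (3 - t₂ - t₁⁻¹ - t₁ / t₂)) := by
  obtain ⟨h₁₂, h₁₁, h₂₂⟩ := ne_of_DG2_ne_zero h₁ h₂ (hD 0 (by norm_num))
  rw [← sum_iterate_xiG2_pow_four_div_DG2 h₁ h₂ h₁₂ h₁₁ h₂₂]
  refine Finset.sum_congr rfl fun k hk => ?_
  obtain ⟨hx, hy⟩ := iterate_xiG2_ne_zero (p := (t₁, t₂)) ⟨h₁, h₂⟩ k
  rw [Gq_diag_inv_inv 4 hx hy (hne k (Finset.mem_range.mp hk))]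
end
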